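/- Let F(x,y,z,u,v) = x^{12} + y^{12} + z^4 + u^4 + v^3 + a·xyzuv + b·x^4 y^4 v with parameters a, b ∈ ℂ (the two-parameter family of Calabi–Yau threefolds in the weighted projective space P(1,1,3,3,4)). There exists a point (x,y,z,u,v) ∈ ℂ^5, not equal to (0,0,0,0,0), at which all five partial derivatives of F vanish, if and only if (b^3 + 27) · (a^{12} − a^8 b^4 − 576 a^8 b + 512 a^4 b^5 + 96768 a^4 b^2 − 65536 b^6 − 3538944 b^3 − 47775744) = 0. -/

import Mathlib

/-! `F` is weighted homogeneous for the weights `(1,1,3,3,4)`, so its critical locus is stable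
under `(x, y, z, u, v) ↦ (c x, c y, c³ z, c³ u, c⁴ v)`; a nonzero critical point has `x ≠ 0`, so we
may take `x = 1`, and then `y¹² = 1` and `z⁴ = u⁴`. If `z = 0`, the equations for `v` force
`b³ + 27 = 0`. If `z ≠ 0`, eliminating the monomial `a y z u` leaves two quadratics in `v` whose
resultant is `-48 z¹⁴ (C z² + D y⁶ u²)`, where `C = a⁴b² - 256b³ - 6912` and `D = a⁶ - 288a²b`;
so `C + ε D = 0` with `ε = y⁶u²/z²`, `ε² = 1`, and `D² - C²` is the second factor of the
discriminant. Conversely, for `ω⁶ = ε`, a common root `v` of the two quadratics and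
`t² = -a ω v / 4`, the point `(1, ω, t, t, v)` is critical. -/

noncomputable def F11334 (a b : ℂ) (p : Fin 5 → ℂ) : ℂ :=
  p 0 ^ 12 + p 1 ^ 12 + p 2 ^ 4 + p 3 ^ 4 + p 4 ^ 3 +
    a * (p 0 * p 1 * p 2 * p 3 * p 4) + b * (p 0 ^ 4 * p 1 ^ 4 * p 4)

theorem quadratic_resultant_eq_zero {R : Type*} [CommRing R] {f₂ f₁ f₀ g₂ g₁ g₀ v : R}
    (hf : f₂ * v ^ 2 + f₁ * v + f₀ = 0) (hg : g₂ * v ^ 2 + g₁ * v + g₀ = 0) :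
    (f₂ * g₀ - f₀ * g₂) ^ 2 - (f₂ * g₁ - f₁ * g₂) * (f₁ * g₀ - f₀ * g₁) = 0 := by
  linear_combination ((f₂ * g₁ - f₁ * g₂) * (g₂ * v + g₁) - (f₂ * g₀ - f₀ * g₂) * g₂) * hf
    + ((f₂ * g₀ - f₀ * g₂) * f₂ - (f₂ * g₁ - f₁ * g₂) * (f₂ * v + f₁)) * hg

namespace F11334

variable {K : Type*} [Field K]

structure IsCriticalPoint (a b x y z u v : K) : Prop where
  dx : 12 * x ^ 11 + a * (y * z * u * v) + 4 * b * (x ^ 3 * y ^ 4 * v) = 0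
  dy : 12 * y ^ 11 + a * (x * z * u * v) + 4 * b * (x ^ 4 * y ^ 3 * v) = 0
  dz : 4 * z ^ 3 + a * (x * y * u * v) = 0
  du : 4 * u ^ 3 + a * (x * y * z * v) = 0
  dv : 3 * v ^ 2 + a * (x * y * z * u) + b * (x ^ 4 * y ^ 4) = 0

def discFactor (ε a b : K) : K :=
  a ^ 4 * b ^ 2 - 256 * b ^ 3 - 6912 + ε * (a ^ 6 - 288 * a ^ 2 * b)

theorem exists_discFactor_eq_zero_iff (a b : K) :
    (∃ ε : K, ε ^ 2 = 1 ∧ discFactor ε a b = 0) ↔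
      a ^ 12 - a ^ 8 * b ^ 4 - 576 * a ^ 8 * b + 512 * a ^ 4 * b ^ 5 +
        96768 * a ^ 4 * b ^ 2 - 65536 * b ^ 6 - 3538944 * b ^ 3 - 47775744 = 0 := by
  constructor
  · rintro ⟨ε, hε, h⟩
    unfold discFactor at h
    linear_combination (ε * (a ^ 6 - 288 * a ^ 2 * b) - (a ^ 4 * b ^ 2 - 256 * b ^ 3 - 6912)) * h
      - (a ^ 6 - 288 * a ^ 2 * b) ^ 2 * hε
  · intro h
    have hprod : discFactor 1 a b * discFactor (-1) a b = 0 := by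
      unfold discFactor
      linear_combination -h
    rcases mul_eq_zero.mp hprod with h1 | h1
    exacts [⟨1, one_pow 2, h1⟩, ⟨-1, by norm_num, h1⟩]

variable {a b x y z u v : K}

theorem IsCriticalPoint.weighted_smul (h : IsCriticalPoint a b x y z u v) (c : K) :
    IsCriticalPoint a b (c * x) (c * y) (c ^ 3 * z) (c ^ 3 * u) (c ^ 4 * v) where
  dx := by linear_combination c ^ 11 * h.dx
  dy := by linear_combination c ^ 11 * h.dy
  dz := by linear_combination c ^ 9 * h.dz
  du := by linear_combination c ^ 9 * h.du
  dv := by linear_combination c ^ 8 * h.dv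

variable [CharZero K]

namespace IsCriticalPoint

theorem eq_zero_of_x_eq_zero (h : IsCriticalPoint a b 0 y z u v) :
    y = 0 ∧ z = 0 ∧ u = 0 ∧ v = 0 :=
  ⟨(pow_eq_zero_iff (n := 11) (by norm_num)).mp (by linear_combination h.dy / 12),
    (pow_eq_zero_iff (n := 3) (by norm_num)).mp (by linear_combination h.dz / 4),
    (pow_eq_zero_iff (n := 3) (by norm_num)).mp (by linear_combination h.du / 4),
    (pow_eq_zero_iff (n := 2) (by norm_num)).mp (by linear_combination h.dv / 3)⟩

theorem pow_twelve_eq_one (h : IsCriticalPoint a b 1 y z u v) : y ^ 12 = 1 := by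
  linear_combination -(h.dx - y * h.dy) / 12

theorem cube_add_eq_zero (h : IsCriticalPoint a b 1 y 0 u v) : b ^ 3 + 27 = 0 := by
  linear_combination -b ^ 3 * h.pow_twelve_eq_one + b ^ 2 * y ^ 8 * h.dv
    - 3 / 16 * (4 * b * y ^ 4 * v - 12) * h.dx

theorem exists_discFactor_eq_zero (h : IsCriticalPoint a b 1 y z u v) (hz : z ≠ 0) :
    ∃ ε : K, ε ^ 2 = 1 ∧ discFactor ε a b = 0 := by
  have hy := h.pow_twelve_eq_one
  have hzu : z ^ 4 = u ^ 4 := by linear_combination (z * h.dz - u * h.du) / 4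
  have hq₁ : 12 * z ^ 4 * v ^ 2 + -(a ^ 2 * y ^ 2 * z ^ 2 * u ^ 2) * v
      + 4 * b * y ^ 4 * u ^ 4 = 0 := by
    linear_combination 4 * z ^ 4 * h.dv - a * y * z ^ 2 * u * h.dz - 4 * b * y ^ 4 * hzu
  have hq₂ : a ^ 2 * y ^ 2 * z ^ 2 * u ^ 2 * v ^ 2 + -(16 * b * y ^ 4 * u ^ 4) * v
      + -(48 * z ^ 4) = 0 := by
    linear_combination -4 * z ^ 4 * h.dx + a * y * z ^ 2 * u * v * h.dz
      + 16 * b * y ^ 4 * v * hzu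
  have hCD : -48 * z ^ 14 * ((a ^ 4 * b ^ 2 - 256 * b ^ 3 - 6912) * z ^ 2
      + (a ^ 6 - 288 * a ^ 2 * b) * (y ^ 6 * u ^ 2)) = 0 := by
    linear_combination quadratic_resultant_eq_zero hq₁ hq₂
      + (48 * a ^ 4 * b ^ 2 - 12288 * b ^ 3) * z ^ 4 * u ^ 12 * hy
      + (-48 * a ^ 6 * y ^ 6 * z ^ 10 * u ^ 2 - 48 * a ^ 4 * b ^ 2 * z ^ 12
          - 48 * a ^ 4 * b ^ 2 * z ^ 8 * u ^ 4 - 48 * a ^ 4 * b ^ 2 * z ^ 4 * u ^ 8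
          + 13824 * a ^ 2 * b * y ^ 6 * z ^ 10 * u ^ 2 + 12288 * b ^ 3 * z ^ 12
          + 12288 * b ^ 3 * z ^ 8 * u ^ 4 + 12288 * b ^ 3 * z ^ 4 * u ^ 8) * hzu
  have hz14 : -48 * z ^ 14 ≠ 0 := mul_ne_zero (by norm_num) (pow_ne_zero _ hz)
  refine ⟨y ^ 6 * u ^ 2 / z ^ 2, ?_, ?_⟩
  · field_simp
    linear_combination u ^ 4 * hy - hzu
  · unfold discFactor
    field_simp
    linear_combination (mul_eq_zero.mp hCD).resolve_left hz14

theorem of_cube_add_eq_zero (hb : b ^ 3 + 27 = 0) : IsCriticalPoint a b 1 1 0 0 (-3 / b) := by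
  have hb₀ : b ≠ 0 := by
    rintro rfl
    norm_num at hb
  constructor
  · field_simp
    ring
  · field_simp
    ring
  · ring
  · ring
  · field_simp
    linear_combination hb

theorem of_common_root {ω t : K} (hω : ω ^ 12 = 1)
    (hf : 12 * v ^ 2 - (a * ω) ^ 2 * v + 4 * (b * ω ^ 4) = 0)
    (hg : (a * ω) ^ 2 * v ^ 2 - 16 * (b * ω ^ 4) * v - 48 = 0)
    (ht : t ^ 2 = -(a * ω * v) / 4) : IsCriticalPoint a b 1 ω t t v where
  dx := by linear_combination a * ω * v * ht - hg / 4
  dy := by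
    have hω₀ : ω ≠ 0 := by
      rintro rfl
      norm_num at hω
    refine mul_left_cancel₀ hω₀ ?_
    linear_combination 12 * hω + a * ω * v * ht - hg / 4
  dz := by linear_combination 4 * t * ht
  du := by linear_combination 4 * t * ht
  dv := by linear_combination a * ω * ht + hf / 4

end IsCriticalPoint

theorem exists_common_root [IsAlgClosed K] {α β : K}
    (h : α ^ 6 + α ^ 4 * β ^ 2 - 288 * α ^ 2 * β - 256 * β ^ 3 - 6912 = 0) :
    ∃ v : K, 12 * v ^ 2 - α ^ 2 * v + 4 * β = 0 ∧ α ^ 2 * v ^ 2 - 16 * β * v - 48 = 0 := by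
  obtain ⟨s, hs⟩ := IsAlgClosed.exists_pow_nat_eq (α ^ 4 - 192 * β) two_pos
  -- the first quadratic has the roots `(α² ± s) / 24`, and the product of the values of the
  -- second one at these roots is `-1/3` times the left-hand side of `h`
  have hprod : (α ^ 2 * ((α ^ 2 + s) / 24) ^ 2 - 16 * β * ((α ^ 2 + s) / 24) - 48)
      * (α ^ 2 * ((α ^ 2 - s) / 24) ^ 2 - 16 * β * ((α ^ 2 - s) / 24) - 48) = 0 := by
    linear_combination -h / 3 + (-α ^ 8 / 331776 + α ^ 4 * β / 576 + α ^ 4 * s ^ 2 / 331776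
      - α ^ 2 / 6 - 4 / 9 * β ^ 2) * hs
  rcases mul_eq_zero.mp hprod with hr | hr
  · exact ⟨(α ^ 2 + s) / 24, by linear_combination hs / 48, hr⟩
  · exact ⟨(α ^ 2 - s) / 24, by linear_combination hs / 48, hr⟩

theorem exists_isCriticalPoint_of_discFactor_eq_zero [IsAlgClosed K] {ε : K}
    (hε : ε ^ 2 = 1) (h : discFactor ε a b = 0) :
    ∃ y z u v : K, IsCriticalPoint a b 1 y z u v := by
  obtain ⟨ω, hω⟩ := IsAlgClosed.exists_pow_nat_eq ε (n := 6) (by norm_num)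
  have hω₁₂ : ω ^ 12 = 1 := by rw [show 12 = 6 * 2 by rfl, pow_mul, hω, hε]
  unfold discFactor at h
  obtain ⟨v, hf, hg⟩ := exists_common_root (α := a * ω) (β := b * ω ^ 4) <| by
    linear_combination h + (a ^ 6 - 288 * a ^ 2 * b) * hω + (a ^ 4 * b ^ 2 - 256 * b ^ 3) * hω₁₂
  obtain ⟨t, ht⟩ := IsAlgClosed.exists_pow_nat_eq (-(a * ω * v) / 4) two_pos
  exact ⟨ω, t, t, v, .of_common_root hω₁₂ hf hg ht⟩

theorem exists_isCriticalPoint_one_iff [IsAlgClosed K] (a b : K) :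
    (∃ y z u v : K, IsCriticalPoint a b 1 y z u v) ↔
      (b ^ 3 + 27) *
        (a ^ 12 - a ^ 8 * b ^ 4 - 576 * a ^ 8 * b + 512 * a ^ 4 * b ^ 5 +
          96768 * a ^ 4 * b ^ 2 - 65536 * b ^ 6 - 3538944 * b ^ 3 - 47775744) = 0 := by
  rw [mul_eq_zero, ← exists_discFactor_eq_zero_iff]
  constructor
  · rintro ⟨y, z, u, v, h⟩
    by_cases hz : z = 0
    · subst hz
      exact .inl h.cube_add_eq_zero
    · exact .inr (h.exists_discFactor_eq_zero hz)
  · rintro (hb | ⟨ε, hε, h⟩)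
    · exact ⟨1, 0, 0, -3 / b, .of_cube_add_eq_zero hb⟩
    · exact exists_isCriticalPoint_of_discFactor_eq_zero hε h

theorem deriv_update (a b : ℂ) (p : Fin 5 → ℂ) (i : Fin 5) :
    deriv (fun t : ℂ => F11334 a b (Function.update p i t)) (p i) =
      ![12 * p 0 ^ 11 + a * (p 1 * p 2 * p 3 * p 4) + 4 * b * (p 0 ^ 3 * p 1 ^ 4 * p 4),
        12 * p 1 ^ 11 + a * (p 0 * p 2 * p 3 * p 4) + 4 * b * (p 0 ^ 4 * p 1 ^ 3 * p 4),
        4 * p 2 ^ 3 + a * (p 0 * p 1 * p 3 * p 4),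
        4 * p 3 ^ 3 + a * (p 0 * p 1 * p 2 * p 4),
        3 * p 4 ^ 2 + a * (p 0 * p 1 * p 2 * p 3) + b * (p 0 ^ 4 * p 1 ^ 4)] i := by
  fin_cases i <;>
    simp (disch := first | decide | fun_prop) [F11334, deriv_fun_add, deriv_fun_mul] <;> ring

theorem forall_deriv_update_eq_zero_iff (a b : ℂ) (p : Fin 5 → ℂ) :
    (∀ i, deriv (fun t : ℂ => F11334 a b (Function.update p i t)) (p i) = 0) ↔
      IsCriticalPoint a b (p 0) (p 1) (p 2) (p 3) (p 4) := by
  simp only [deriv_update]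
  refine ⟨fun h => ⟨h 0, h 1, h 2, h 3, h 4⟩, fun h i => ?_⟩
  fin_cases i
  exacts [h.dx, h.dy, h.dz, h.du, h.dv]

end F11334

theorem stmt_19 (a b : ℂ) :
    (∃ p : Fin 5 → ℂ, p ≠ 0 ∧ ∀ i : Fin 5,
        deriv (fun t : ℂ => F11334 a b (Function.update p i t)) (p i) = 0) ↔
      (b ^ 3 + 27) *
        (a ^ 12 - a ^ 8 * b ^ 4 - 576 * a ^ 8 * b + 512 * a ^ 4 * b ^ 5 +
          96768 * a ^ 4 * b ^ 2 - 65536 * b ^ 6 - 3538944 * b ^ 3 - 47775744) = 0 := by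
  simp only [F11334.forall_deriv_update_eq_zero_iff]
  rw [← F11334.exists_isCriticalPoint_one_iff]
  constructor
  · rintro ⟨p, hp, h⟩
    have hx : p 0 ≠ 0 := by
      intro hx
      rw [hx] at h
      obtain ⟨hy, hz, hu, hv⟩ := h.eq_zero_of_x_eq_zero
      exact hp (funext fun i => by fin_cases i <;> simp [hx, hy, hz, hu, hv])
    have h₁ := h.weighted_smul (p 0)⁻¹
    rw [inv_mul_cancel₀ hx] at h₁
    exact ⟨_, _, _, _, h₁⟩
  · rintro ⟨y, z, u, v, h⟩
    exact ⟨![1, y, z, u, v], fun h₀ => one_ne_zero (congrFun h₀ 0), h⟩
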